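/- arXiv:1712.06043 — 9 statements merged into one kernel-verified Lean document; each statement's English description precedes it below -/
import Mathlib

section
/- Let (A, ≤, →) be an implicative structure with associated application map ∘, and let k = ⨅_{a,b ∈ A} (a → (b → a)). Then for all a, b ∈ A: (k ∘ a) ∘ b ≤ a. -/
/-- The application map associated to an implication on a complete lattice. -/
def appOf {A : Type*} [CompleteLattice A] (imp : A → A → A) (a b : A) : A :=
  sInf {c | a ≤ imp b c}

theorem appOf_le_of_le_imp {A : Type*} [CompleteLattice A] {imp : A → A → A} {a b c : A}
    (h : a ≤ imp b c) : appOf imp a b ≤ c :=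
  sInf_le h

theorem k_combinator_general {A : Type*} [CompleteLattice A] (imp : A → A → A)
    (a b : A) :
    appOf imp (appOf imp (⨅ (x : A) (y : A), imp x (imp y x)) a) b ≤ a :=
  appOf_le_of_le_imp <| appOf_le_of_le_imp <| (iInf_le _ a).trans (iInf_le _ b)

/-- With `k = ⨅_{a,b} (a → (b → a))`, one has `(k ∘ a) ∘ b ≤ a` for all `a b`. -/
theorem k_combinator {A : Type*} [CompleteLattice A] (imp : A → A → A)
    (hmono : ∀ a a' b b' : A, a' ≤ a → b ≤ b' → imp a b ≤ imp a' b')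
    (hinf : ∀ (a : A) (B : Set A), imp a (sInf B) = ⨅ b ∈ B, imp a b)
    (a b : A) :
    appOf imp (appOf imp (⨅ (x : A) (y : A), imp x (imp y x)) a) b ≤ a :=
  k_combinator_general imp a b
end

section
/- Let (A, ≤, →) be an implicative structure with associated application map ∘, and let s = ⨅_{a,b,c ∈ A} ((a → (b → c)) → ((a → b) → (a → c))). Then for all a, b, c ∈ A: ((s ∘ a) ∘ b) ∘ c ≤ (a ∘ c) ∘ (b ∘ c). -/
section Application

variable {A : Type*} [CompleteLattice A] {imp : A → A → A}

theorem imp_mono_right (hinf : ∀ (a : A) (B : Set A), imp a (sInf B) = ⨅ b ∈ B, imp a b)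
    (y : A) : Monotone (imp y) := by
  intro b b' hb
  have hsInf : sInf {b, b'} = b := by rw [sInf_pair, inf_eq_left.mpr hb]
  calc imp y b = ⨅ x ∈ ({b, b'} : Set A), imp y x := by rw [← hinf, hsInf]
    _ ≤ imp y b' := biInf_le _ (Set.mem_insert_of_mem b rfl)

theorem le_imp_appOf (hinf : ∀ (a : A) (B : Set A), imp a (sInf B) = ⨅ b ∈ B, imp a b)
    (x y : A) : x ≤ imp y (appOf imp x y) := by
  rw [appOf, hinf]
  exact le_iInf₂ fun _ hc => hc

theorem gc_appOf_imp (hinf : ∀ (a : A) (B : Set A), imp a (sInf B) = ⨅ b ∈ B, imp a b)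
    (y : A) : GaloisConnection (fun x => appOf imp x y) (imp y) := fun x _ =>
  ⟨fun h => (le_imp_appOf hinf x y).trans (imp_mono_right hinf y h), fun h => sInf_le h⟩

end Application

/-- With `s = ⨅_{a,b,c} ((a → (b → c)) → ((a → b) → (a → c)))`, one has
`((s ∘ a) ∘ b) ∘ c ≤ (a ∘ c) ∘ (b ∘ c)` for all `a b c`. -/
theorem s_combinator {A : Type*} [CompleteLattice A] (imp : A → A → A)
    (hmono : ∀ a a' b b' : A, a' ≤ a → b ≤ b' → imp a b ≤ imp a' b')
    (hinf : ∀ (a : A) (B : Set A), imp a (sInf B) = ⨅ b ∈ B, imp a b)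
    (a b c : A) :
    appOf imp (appOf imp (appOf imp
        (⨅ (x : A) (y : A) (z : A), imp (imp x (imp y z)) (imp (imp x y) (imp x z))) a) b) c
      ≤ appOf imp (appOf imp a c) (appOf imp b c) := by
  have gc := gc_appOf_imp hinf
  set t := appOf imp (appOf imp a c) (appOf imp b c)
  rw [gc c, gc b, gc a]
  have ha : a ≤ imp c (imp (appOf imp b c) t) := by rw [← gc c, ← gc (appOf imp b c)]
  have hb : b ≤ imp c (appOf imp b c) := le_imp_appOf hinf b c
  calc (⨅ (x : A) (y : A) (z : A), imp (imp x (imp y z)) (imp (imp x y) (imp x z)))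
      ≤ imp (imp c (imp (appOf imp b c) t)) (imp (imp c (appOf imp b c)) (imp c t)) :=
        (iInf_le _ c).trans ((iInf_le _ _).trans (iInf_le _ t))
    _ ≤ imp a (imp b (imp c t)) := hmono _ _ _ _ ha (hmono _ _ _ _ hb le_rfl)
end

section
/- Let K (based on Π) and K′ (based on Π′) be abstract Krivine structures and let f : Π → Π′ be an applicative morphism of AKSs. Then the induced map 𝒫(f) : 𝒫(Π) → 𝒫(Π′), P ↦ f(P) (the image of P under f), is an applicative morphism between the implicative algebras A(K) and A(K′). Moreover, if f is a computationally dense morphism of AKSs, then 𝒫(f) is a computationally dense applicative morphism of implicative algebras. -/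
/-- An abstract Krivine structure (AKS). -/
structure AKS (X : Type*) where
  push : X → X → X
  app : X → X → X
  perp : X → X → Prop
  compat : ∀ t s p, perp t (push s p) → perp (app t s) p
  QP : Set X
  QP_app : ∀ t s, t ∈ QP → s ∈ QP → app t s ∈ QP
  combK : X
  combS : X
  K_mem : combK ∈ QP
  S_mem : combS ∈ QP
  K_cond : ∀ t s p, perp t p → perp combK (push t (push s p))
  S_cond : ∀ t s u p, perp (app (app t u) (app s u)) p →
    perp combS (push t (push s (push u p)))

/-- The left orthogonal `⊥P` of a set `P`. -/
def AKS.orth {X : Type*} (K : AKS X) (P : Set X) : Set X :=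
  {t | ∀ p ∈ P, K.perp t p}

/-- The implication `P → Q = {t·π : t ∈ ⊥P, π ∈ Q}` of the realizability lattice. -/
def AKS.impSet {X : Type*} (K : AKS X) (P Q : Set X) : Set X :=
  {x | ∃ t ∈ K.orth P, ∃ p ∈ Q, x = K.push t p}

/-- The separator of the implicative algebra `A(K)`: sets orthogonal to
some quasi-proof. -/
def AKS.sep {X : Type*} (K : AKS X) : Set (Set X) :=
  {P | ∃ t ∈ K.QP, t ∈ K.orth P}

/-- An applicative morphism of AKSs. -/
def IsAKSAppMor {X Y : Type*} (K : AKS X) (K' : AKS Y) (f : X → Y) : Prop :=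
  (∀ P : Set X, P ∈ K.sep → (f '' P) ∈ K'.sep) ∧
  ∃ r ∈ K'.QP, ∀ P P' : Set X, K.impSet P' P ∈ K.sep →
    r ∈ K'.orth (K'.impSet (f '' K.impSet P' P) (K'.impSet (f '' P') (f '' P)))

/-- A computationally dense morphism of AKSs. -/
def IsAKSCompDense {X Y : Type*} (K : AKS X) (K' : AKS Y) (f : X → Y) : Prop :=
  IsAKSAppMor K K' f ∧
  ∃ h : Set Y → Set X, (∀ R ∈ K'.sep, h R ∈ K.sep) ∧
    (∀ R R' : Set Y, R ∈ K'.sep → R' ∈ K'.sep → R' ⊆ R → h R' ⊆ h R) ∧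
    ∃ t ∈ K'.QP, ∀ R ∈ K'.sep, t ∈ K'.orth (K'.impSet (f '' h R) R)

/-- An applicative morphism between the implicative algebras `A(K)` and `A(K')`,
where `𝒫(Π)` carries the reverse-inclusion order (so `≤` is `⊇`, and infima are
unions). -/
def IsAlgAppMorSets {X Y : Type*} (K : AKS X) (K' : AKS Y) (F : Set X → Set Y) : Prop :=
  (∀ P ∈ K.sep, F P ∈ K'.sep) ∧
  (∃ R ∈ K'.sep, ∀ P Q : Set X, K.impSet P Q ∈ K.sep →
      K'.impSet (F (K.impSet P Q)) (K'.impSet (F P) (F Q)) ⊆ R) ∧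
  (∀ 𝒳 : Set (Set X), F (⋃₀ 𝒳) = ⋃₀ (F '' 𝒳))

/-- A computationally dense applicative morphism between `A(K)` and `A(K')`. -/
def IsAlgCompDenseSets {X Y : Type*} (K : AKS X) (K' : AKS Y)
    (F : Set X → Set Y) : Prop :=
  IsAlgAppMorSets K K' F ∧
  ∃ h : Set Y → Set X, (∀ R ∈ K'.sep, h R ∈ K.sep) ∧
    (∀ R R' : Set Y, R ∈ K'.sep → R' ∈ K'.sep → R' ⊆ R → h R' ⊆ h R) ∧
    ∃ T ∈ K'.sep, ∀ R ∈ K'.sep, K'.impSet (F (h R)) R ⊆ T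

/-! A quasi-proof `r` orthogonal to every member of a family of sets puts the whole family
below the single separator element `{π | r ⊥ π}`; this turns the realizers in the definitions
for AKSs into the separator bounds required of implicative algebras. -/

theorem AKS.exists_mem_sep_forall_subset {X ι : Type*} (K : AKS X) {r : X} (hr : r ∈ K.QP)
    {S : ι → Set X} (hS : ∀ i, r ∈ K.orth (S i)) : ∃ R ∈ K.sep, ∀ i, S i ⊆ R :=
  ⟨{p | K.perp r p}, ⟨r, hr, fun _ hp => hp⟩, fun i _ hp => hS i _ hp⟩

theorem IsAKSAppMor.isAlgAppMorSets_image {X Y : Type*} {K : AKS X} {K' : AKS Y} {f : X → Y}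
    (hf : IsAKSAppMor K K' f) : IsAlgAppMorSets K K' (fun P => f '' P) := by
  obtain ⟨hsep, r, hr, hr_orth⟩ := hf
  obtain ⟨R, hR, hbound⟩ := K'.exists_mem_sep_forall_subset hr
    (S := fun PQ : {PQ : Set X × Set X // K.impSet PQ.1 PQ.2 ∈ K.sep} =>
      K'.impSet (f '' K.impSet PQ.1.1 PQ.1.2) (K'.impSet (f '' PQ.1.1) (f '' PQ.1.2)))
    fun PQ => hr_orth _ _ PQ.2
  exact ⟨hsep, ⟨R, hR, fun P Q hPQ => hbound ⟨(P, Q), hPQ⟩⟩, fun _ => Set.image_sUnion⟩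

theorem IsAKSCompDense.isAlgCompDenseSets_image {X Y : Type*} {K : AKS X} {K' : AKS Y}
    {f : X → Y} (hf : IsAKSCompDense K K' f) : IsAlgCompDenseSets K K' (fun P => f '' P) := by
  obtain ⟨hmor, h, hsep, hmono, t, ht, ht_orth⟩ := hf
  obtain ⟨T, hT, hbound⟩ := K'.exists_mem_sep_forall_subset ht
    (S := fun R : K'.sep => K'.impSet (f '' h R) R) fun R => ht_orth R R.2
  exact ⟨hmor.isAlgAppMorSets_image, h, hsep, hmono, T, hT, fun R hR => hbound ⟨R, hR⟩⟩

/-- If `f : Π → Π'` is an applicative morphism of AKSs then the image map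
`𝒫(f) : 𝒫(Π) → 𝒫(Π')` is an applicative morphism of the implicative algebras
`A(K)`, `A(K')`; computational density of `f` gives computational density of `𝒫(f)`. -/
theorem image_functor_A {X Y : Type*} (K : AKS X) (K' : AKS Y) (f : X → Y) :
    (IsAKSAppMor K K' f → IsAlgAppMorSets K K' (fun P => f '' P)) ∧
    (IsAKSCompDense K K' f → IsAlgCompDenseSets K K' (fun P => f '' P)) :=
  ⟨IsAKSAppMor.isAlgAppMorSets_image, IsAKSCompDense.isAlgCompDenseSets_image⟩
end

section
/- Let f : (A, S_A) → (B, S_B) be an applicative morphism of implicative algebras. Then f, regarded as a map between the abstract Krivine structures K(A) and K(B), is an applicative morphism of AKSs. Moreover, if f is computationally dense as a morphism of implicative algebras, then K(f) = f is computationally dense as a morphism of AKSs. -/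
/-- In the AKS `K(A)` associated to an implicative algebra, `⊥P` is the set of
lower bounds of `P`. -/
def lowOrth {A : Type*} [CompleteLattice A] (P : Set A) : Set A :=
  {t | ∀ p ∈ P, t ≤ p}

/-- The push-implication of the AKS `K(A)`: `P ⇒ Q = {t → π : t ∈ ⊥P, π ∈ Q}`. -/
def pushSet {A : Type*} [CompleteLattice A] (imp : A → A → A) (P Q : Set A) : Set A :=
  {x | ∃ t ∈ lowOrth P, ∃ q ∈ Q, x = imp t q}

/-- The separator of `A(K(A))`: subsets admitting a lower bound in `S`. -/
def sepSet {A : Type*} [CompleteLattice A] (S : Set A) : Set (Set A) :=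
  {R | ∃ t ∈ S, t ∈ lowOrth R}

/-!
Everything rests on `⨅ P` being the largest element of `⊥P`. Since `f` preserves infima,
`f (⨅ P')` lies above all of `⊥(f P')`, so the realizer `r` of `f` on the single
implication `⨅ P' → p` bounds every element of `f(P' ⇒ P) ⇒ (f P' ⇒ f P)`. For density, `ĥ R`
collects the `h b` with `b ∈ S_B` above `⨅ R`; it is realized by `h (⨅ R)`, and `t` turns
`f (h (⨅ R))` into `⨅ R`.
-/

section

variable {A B : Type*} [CompleteLattice A] [CompleteLattice B]

theorem mem_lowOrth_iff_le_sInf {t : A} {P : Set A} : t ∈ lowOrth P ↔ t ≤ sInf P :=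
  le_sInf_iff.symm

theorem sInf_mem_of_mem_sepSet {S : Set A} (hS : IsUpperSet S) {R : Set A}
    (hR : R ∈ sepSet S) : sInf R ∈ S := by
  obtain ⟨t, htS, ht⟩ := hR
  exact hS (mem_lowOrth_iff_le_sInf.1 ht) htS

theorem image_mem_sepSet {f : A → B} (hf : Monotone f) {SA : Set A} {SB : Set B}
    (hfS : Set.MapsTo f SA SB) {P : Set A} (hP : P ∈ sepSet SA) : f '' P ∈ sepSet SB := by
  obtain ⟨t, htS, ht⟩ := hP
  refine ⟨f t, hfS htS, ?_⟩
  rintro _ ⟨p, hp, rfl⟩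
  exact hf (ht p hp)

theorem mem_lowOrth_pushSet_image_pushSet {impA : A → A → A} {impB : B → B → B}
    (hmonoB : ∀ a a' b b' : B, a' ≤ a → b ≤ b' → impB a b ≤ impB a' b')
    {SA : Set A} (hSA : IsUpperSet SA) {f : A → B}
    (hf : ∀ P : Set A, f (sInf P) = sInf (f '' P)) {r : B}
    (hr : ∀ a a' : A, impA a a' ∈ SA → r ≤ impB (f (impA a a')) (impB (f a) (f a')))
    {P P' : Set A} (hP : pushSet impA P' P ∈ sepSet SA) :
    r ∈ lowOrth (pushSet impB (f '' pushSet impA P' P) (pushSet impB (f '' P') (f '' P))) := by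
  rintro _ ⟨t, ht, _, ⟨u, hu, _, ⟨p, hp, rfl⟩, rfl⟩, rfl⟩
  have hmem : impA (sInf P') p ∈ pushSet impA P' P :=
    ⟨sInf P', fun _ => sInf_le, p, hp, rfl⟩
  have hsep : impA (sInf P') p ∈ SA :=
    hSA (sInf_le hmem) (sInf_mem_of_mem_sepSet hSA hP)
  have htf : t ≤ f (impA (sInf P') p) := ht _ ⟨_, hmem, rfl⟩
  have huf : u ≤ f (sInf P') := hf P' ▸ mem_lowOrth_iff_le_sInf.1 hu
  exact (hr _ _ hsep).trans (hmonoB _ _ _ _ htf (hmonoB _ _ _ _ huf le_rfl))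

end

section

variable {A B : Type*} [CompleteLattice B]

/-- The paper's `ĥ`. Taking all `b ≥ ⨅ R` rather than `⨅ R` alone makes it monotone in `R`. -/
def hatLift (SB : Set B) (h : B → A) (R : Set B) : Set A :=
  h '' {b | b ∈ SB ∧ sInf R ≤ b}

theorem hatLift_mono (SB : Set B) (h : B → A) {R R' : Set B} (hRR' : R' ⊆ R) :
    hatLift SB h R' ⊆ hatLift SB h R := by
  rintro _ ⟨b, ⟨hbS, hb⟩, rfl⟩
  exact ⟨b, ⟨hbS, (sInf_le_sInf hRR').trans hb⟩, rfl⟩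

theorem hatLift_mem_sepSet [CompleteLattice A] {SA : Set A} {SB : Set B} (hSB : IsUpperSet SB)
    {h : B → A} (hS : Set.MapsTo h SB SA) (hmono : MonotoneOn h SB) {R : Set B}
    (hR : R ∈ sepSet SB) :
    hatLift SB h R ∈ sepSet SA := by
  have hinf := sInf_mem_of_mem_sepSet hSB hR
  refine ⟨h (sInf R), hS hinf, ?_⟩
  rintro _ ⟨b, ⟨hbS, hb⟩, rfl⟩
  exact hmono hinf hbS hb

theorem mem_lowOrth_pushSet_image_hatLift {impB : B → B → B}
    (hmonoB : ∀ a a' b b' : B, a' ≤ a → b ≤ b' → impB a b ≤ impB a' b')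
    {SB : Set B} (hSB : IsUpperSet SB) {f : A → B} {h : B → A} {t : B}
    (ht : ∀ b ∈ SB, t ≤ impB (f (h b)) b) {R : Set B} (hR : R ∈ sepSet SB) :
    t ∈ lowOrth (pushSet impB (f '' hatLift SB h R) R) := by
  rintro _ ⟨u, hu, π, hπ, rfl⟩
  have hinf := sInf_mem_of_mem_sepSet hSB hR
  have huf : u ≤ f (h (sInf R)) := hu _ ⟨_, ⟨sInf R, ⟨hinf, le_rfl⟩, rfl⟩, rfl⟩
  exact (ht _ hinf).trans (hmonoB _ _ _ _ huf (sInf_le hπ))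

end

theorem K_functor_general {A B : Type*} [CompleteLattice A] [CompleteLattice B]
    (impA : A → A → A) (impB : B → B → B)
    (hmonoB : ∀ a a' b b' : B, a' ≤ a → b ≤ b' → impB a b ≤ impB a' b')
    (SA : Set A) (SB : Set B)
    (SAup : ∀ a b : A, a ∈ SA → a ≤ b → b ∈ SA)
    (SBup : ∀ a b : B, a ∈ SB → a ≤ b → b ∈ SB)
    (f : A → B)
    (hf1 : ∀ a ∈ SA, f a ∈ SB)
    (hf2 : ∃ r ∈ SB, ∀ a a' : A, impA a a' ∈ SA →
        r ≤ impB (f (impA a a')) (impB (f a) (f a')))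
    (hf3 : ∀ P : Set A, f (sInf P) = sInf (f '' P)) :
    -- (a): K(f) = f is an applicative morphism of AKSs
    ((∀ P : Set A, P ∈ sepSet SA → (f '' P) ∈ sepSet SB) ∧
      (∃ r ∈ SB, ∀ P P' : Set A, pushSet impA P' P ∈ sepSet SA →
        ∀ σ ∈ pushSet impB (f '' pushSet impA P' P)
            (pushSet impB (f '' P') (f '' P)), r ≤ σ)) ∧
    -- (b): computational density transfers from f to K(f)
    ((∃ h : B → A, (∀ b ∈ SB, h b ∈ SA) ∧
        (∀ b b' : B, b ∈ SB → b' ∈ SB → b ≤ b' → h b ≤ h b') ∧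
        ∃ t ∈ SB, ∀ b ∈ SB, t ≤ impB (f (h b)) b) →
      ∃ hh : Set B → Set A, (∀ R ∈ sepSet SB, hh R ∈ sepSet SA) ∧
        (∀ R R' : Set B, R ∈ sepSet SB → R' ∈ sepSet SB → R' ⊆ R → hh R' ⊆ hh R) ∧
        ∃ t ∈ SB, ∀ R ∈ sepSet SB, ∀ σ ∈ pushSet impB (f '' hh R) R, t ≤ σ) := by
  have hSA : IsUpperSet SA := fun a b hab ha => SAup a b ha hab
  have hSB : IsUpperSet SB := fun a b hab ha => SBup a b ha hab
  have hfmono : Monotone f := OrderHomClass.mono (sInfHom.mk f hf3)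
  obtain ⟨r, hrS, hr⟩ := hf2
  refine ⟨⟨fun P => image_mem_sepSet hfmono hf1,
    r, hrS, fun P P' hP => mem_lowOrth_pushSet_image_pushSet hmonoB hSA hf3 hr hP⟩, ?_⟩
  rintro ⟨h, hS, hmono, t, htS, ht⟩
  exact ⟨hatLift SB h,
    fun R => hatLift_mem_sepSet hSB hS (fun b hb b' hb' => hmono b b' hb hb'),
    fun R R' _ _ => hatLift_mono SB h,
    t, htS, fun R hR => mem_lowOrth_pushSet_image_hatLift hmonoB hSB ht hR⟩

/-- An applicative morphism of implicative algebras induces an applicative morphism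
between the associated abstract Krivine structures `K(A)` and `K(B)`; moreover it is
computationally dense if the original morphism is. -/
theorem K_functor {A B : Type*} [CompleteLattice A] [CompleteLattice B]
    (impA : A → A → A) (impB : B → B → B)
    (hmonoA : ∀ a a' b b' : A, a' ≤ a → b ≤ b' → impA a b ≤ impA a' b')
    (hinfA : ∀ (a : A) (P : Set A), impA a (sInf P) = ⨅ b ∈ P, impA a b)
    (hmonoB : ∀ a a' b b' : B, a' ≤ a → b ≤ b' → impB a b ≤ impB a' b')
    (hinfB : ∀ (a : B) (P : Set B), impB a (sInf P) = ⨅ b ∈ P, impB a b)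
    (SA : Set A) (SB : Set B)
    (SAup : ∀ a b : A, a ∈ SA → a ≤ b → b ∈ SA)
    (SAmp : ∀ a b : A, impA a b ∈ SA → a ∈ SA → b ∈ SA)
    (SAk : (⨅ (x : A) (y : A), impA x (impA y x)) ∈ SA)
    (SAs : (⨅ (x : A) (y : A) (z : A),
        impA (impA x (impA y z)) (impA (impA x y) (impA x z))) ∈ SA)
    (SBup : ∀ a b : B, a ∈ SB → a ≤ b → b ∈ SB)
    (SBmp : ∀ a b : B, impB a b ∈ SB → a ∈ SB → b ∈ SB)
    (SBk : (⨅ (x : B) (y : B), impB x (impB y x)) ∈ SB)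
    (SBs : (⨅ (x : B) (y : B) (z : B),
        impB (impB x (impB y z)) (impB (impB x y) (impB x z))) ∈ SB)
    (f : A → B)
    (hf1 : ∀ a ∈ SA, f a ∈ SB)
    (hf2 : ∃ r ∈ SB, ∀ a a' : A, impA a a' ∈ SA →
        r ≤ impB (f (impA a a')) (impB (f a) (f a')))
    (hf3 : ∀ P : Set A, f (sInf P) = sInf (f '' P)) :
    -- (a): K(f) = f is an applicative morphism of AKSs
    ((∀ P : Set A, P ∈ sepSet SA → (f '' P) ∈ sepSet SB) ∧
      (∃ r ∈ SB, ∀ P P' : Set A, pushSet impA P' P ∈ sepSet SA →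
        ∀ σ ∈ pushSet impB (f '' pushSet impA P' P)
            (pushSet impB (f '' P') (f '' P)), r ≤ σ)) ∧
    -- (b): computational density transfers from f to K(f)
    ((∃ h : B → A, (∀ b ∈ SB, h b ∈ SA) ∧
        (∀ b b' : B, b ∈ SB → b' ∈ SB → b ≤ b' → h b ≤ h b') ∧
        ∃ t ∈ SB, ∀ b ∈ SB, t ≤ impB (f (h b)) b) →
      ∃ hh : Set B → Set A, (∀ R ∈ sepSet SB, hh R ∈ sepSet SA) ∧
        (∀ R R' : Set B, R ∈ sepSet SB → R' ∈ sepSet SB → R' ⊆ R → hh R' ⊆ hh R) ∧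
        ∃ t ∈ SB, ∀ R ∈ sepSet SB, ∀ σ ∈ pushSet impB (f '' hh R) R, t ≤ σ) :=
  K_functor_general impA impB hmonoB SA SB SAup SBup f hf1 hf2 hf3
end

section
/- Let (A, S) be an implicative algebra. Consider 𝒫(A) ordered by reverse inclusion, with implication C ⤳ D = {c → d : c ∈ A, c ≤ ⨅ C, d ∈ D} and separator 𝔖 = {C ⊆ A : ⨅ C ∈ S} (this is the implicative algebra A(K(A))). Then the map ε : 𝒫(A) → A defined by ε(C) = ⨅ C is a computationally dense applicative morphism from (𝒫(A), ⊇, ⤳, 𝔖) to (A, ≤, →, S); in particular a right inverse witnessing density is given by h : a ↦ {b ∈ A : a ≤ b}. -/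
/-!
The counit `ε = sInf` preserves infima because infima in `𝒫(A)` are unions, and
`h a = Set.Ici a` is a right inverse of it. Both the applicativity of `ε` and its density
are then realized by the identity combinator `i = ⨅ a, a → a`, which lies in `S` since
`s k k ≤ i`: indeed `i ≤ ⨅ (C ⤳ D) → (⨅ C → ⨅ D)` because `⨅ (C ⤳ D) ≤ ⨅ C → ⨅ D`, and
`i ≤ ⨅ h(b) → b` because `⨅ h(b) = b`.
-/

/-- The implication of the implicative algebra `A(K(A))` on `𝒫(A)` (ordered by
reverse inclusion): `C ⤳ D = {c → d : c ≤ ⨅ C, d ∈ D}`. -/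
def impSets {A : Type*} [CompleteLattice A] (imp : A → A → A) (C D : Set A) : Set A :=
  {x | ∃ c d : A, c ≤ sInf C ∧ d ∈ D ∧ x = imp c d}

section ImplicativeStructure

variable {A : Type*} [CompleteLattice A] {imp : A → A → A}

theorem imp_iInf (hinf : ∀ (a : A) (P : Set A), imp a (sInf P) = ⨅ b ∈ P, imp a b)
    {ι : Sort*} (a : A) (f : ι → A) : imp a (⨅ j, f j) = ⨅ j, imp a (f j) := by
  rw [iInf, hinf, iInf_range]

theorem sInf_impSets_le (hinf : ∀ (a : A) (P : Set A), imp a (sInf P) = ⨅ b ∈ P, imp a b)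
    (C D : Set A) : sInf (impSets imp C D) ≤ imp (sInf C) (sInf D) := by
  rw [hinf]
  exact le_iInf₂ fun d hd => sInf_le ⟨sInf C, d, le_rfl, hd, rfl⟩

theorem s_le_imp_k_imp_k_identity
    (hmono : ∀ a a' b b' : A, a' ≤ a → b ≤ b' → imp a b ≤ imp a' b')
    (hinf : ∀ (a : A) (P : Set A), imp a (sInf P) = ⨅ b ∈ P, imp a b) :
    (⨅ (x : A) (y : A) (z : A), imp (imp x (imp y z)) (imp (imp x y) (imp x z))) ≤
      imp (⨅ (x : A) (y : A), imp x (imp y x))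
        (imp (⨅ (x : A) (y : A), imp x (imp y x)) (⨅ a : A, imp a a)) := by
  have hk : ∀ x y : A, (⨅ (x : A) (y : A), imp x (imp y x)) ≤ imp x (imp y x) :=
    fun x y => (iInf_le _ x).trans (iInf_le _ y)
  rw [imp_iInf hinf, imp_iInf hinf]
  refine le_iInf fun a => ?_
  -- instantiate `s` at `x = a`, `y = a → a`, `z = a`
  refine (iInf₂_le a (imp a a)).trans ((iInf_le _ a).trans ?_)
  exact hmono _ _ _ _ (hk a (imp a a)) (hmono _ _ _ _ (hk a a) le_rfl)

theorem identity_mem (hmono : ∀ a a' b b' : A, a' ≤ a → b ≤ b' → imp a b ≤ imp a' b')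
    (hinf : ∀ (a : A) (P : Set A), imp a (sInf P) = ⨅ b ∈ P, imp a b)
    {S : Set A} (Sup : ∀ a b : A, a ∈ S → a ≤ b → b ∈ S)
    (Smp : ∀ a b : A, imp a b ∈ S → a ∈ S → b ∈ S)
    (Sk : (⨅ (x : A) (y : A), imp x (imp y x)) ∈ S)
    (Ss : (⨅ (x : A) (y : A) (z : A),
        imp (imp x (imp y z)) (imp (imp x y) (imp x z))) ∈ S) :
    (⨅ a : A, imp a a) ∈ S :=
  Smp _ _ (Smp _ _ (Sup _ _ Ss (s_le_imp_k_imp_k_identity hmono hinf)) Sk) Sk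

end ImplicativeStructure

/-- The counit map `ε(C) = ⨅ C : 𝒫(A) → A` is a computationally dense applicative
morphism from `A(K(A)) = (𝒫(A), ⊇, ⤳, 𝔖)` (with `𝔖 = {C : ⨅ C ∈ S}`) to `(A, ≤, →, S)`,
a density witness being `h : a ↦ {b : a ≤ b}`, a right inverse of `ε`. -/
theorem counit_comp_dense {A : Type*} [CompleteLattice A] (imp : A → A → A)
    (hmono : ∀ a a' b b' : A, a' ≤ a → b ≤ b' → imp a b ≤ imp a' b')
    (hinf : ∀ (a : A) (P : Set A), imp a (sInf P) = ⨅ b ∈ P, imp a b)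
    (S : Set A)
    (Sup : ∀ a b : A, a ∈ S → a ≤ b → b ∈ S)
    (Smp : ∀ a b : A, imp a b ∈ S → a ∈ S → b ∈ S)
    (Sk : (⨅ (x : A) (y : A), imp x (imp y x)) ∈ S)
    (Ss : (⨅ (x : A) (y : A) (z : A),
        imp (imp x (imp y z)) (imp (imp x y) (imp x z))) ∈ S) :
    -- (1) ε maps the separator 𝔖 into S
    (∀ C : Set A, sInf C ∈ S → sInf C ∈ S) ∧
    -- (2) ε is applicative: uniform realizer for implications
    (∃ r ∈ S, ∀ C D : Set A, sInf (impSets imp C D) ∈ S →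
        r ≤ imp (sInf (impSets imp C D)) (imp (sInf C) (sInf D))) ∧
    -- (3) ε commutes with infima (infima in 𝒫(A) are unions)
    (∀ 𝒳 : Set (Set A), sInf (⋃₀ 𝒳) = ⨅ C ∈ 𝒳, sInf C) ∧
    -- h maps S into 𝔖 and is monotone (w.r.t reverse inclusion on 𝒫(A))
    (∀ a ∈ S, sInf {b : A | a ≤ b} ∈ S) ∧
    (∀ a a' : A, a ∈ S → a' ∈ S → a ≤ a' → {b : A | a' ≤ b} ⊆ {b : A | a ≤ b}) ∧
    -- h is a right inverse of ε
    (∀ a : A, sInf {b : A | a ≤ b} = a) ∧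
    -- computational density witnessed by h
    (∃ t ∈ S, ∀ b ∈ S, t ≤ imp (sInf {x : A | b ≤ x}) b) := by
  have hi := identity_mem hmono hinf Sup Smp Sk Ss
  have hIci : ∀ a : A, sInf {b : A | a ≤ b} = a := fun _ => csInf_Ici
  refine ⟨fun _ h => h, ⟨_, hi, fun C D _ => ?_⟩, sInf_sUnion, fun a ha => ?_,
    fun _ _ _ _ h => Set.Ici_subset_Ici.mpr h, hIci, ⟨_, hi, fun b _ => ?_⟩⟩
  · exact (iInf_le _ _).trans (hmono _ _ _ _ le_rfl (sInf_impSets_le hinf C D))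
  · rwa [hIci]
  · rw [hIci]
    exact iInf_le _ b
end

section
/- Let X be a set and let c : 𝒫(X) → 𝒫(X) be an interior operator on 𝒫(X) ordered by reverse inclusion, i.e. a map with P ⊆ c(P), c(c(P)) = c(P), and P ⊆ Q implies c(P) ⊆ c(Q). Define κ : 𝒫(X) → 𝒫(X) by κ(P) = ⋃_{x ∈ P} c({x}). Then: κ is again such an operator (P ⊆ κ(P), κ idempotent, κ monotone); κ preserves arbitrary unions, κ(⋃_i P_i) = ⋃_i κ(P_i); κ(P) ⊆ c(P) for every P ⊆ X; and κ is the largest union-preserving such operator below c: for every operator ρ : 𝒫(X) → 𝒫(X) with P ⊆ ρ(P), ρ idempotent, ρ monotone, ρ preserving arbitrary unions, and ρ(P) ⊆ c(P) for all P, one has ρ(P) ⊆ κ(P) for all P ⊆ X. In other words, c is AL-approximable with Alexandroff approximation κ. -/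
/-!
`κ` glues together the closures of points. Monotonicity and idempotency of `c` give
`c {y} ⊆ c {x}` whenever `y ∈ c {x}`, which makes `κ` idempotent. Conversely, an operator
preserving unions is determined by its values on singletons, `ρ = ⋃_{x ∈ P} ρ {x}`, so
`ρ ≤ c` on singletons already gives `ρ ≤ κ`.
-/

/-- The Alexandroff approximation `κ(P) = ⋃_{x ∈ P} c({x})` of a set-theoretic
closure operator `c` (an interior operator for reverse inclusion). -/
def alexApprox {X : Type*} (c : Set X → Set X) (P : Set X) : Set X :=
  ⋃ x ∈ P, c {x}

namespace alexApprox

variable {X : Type*}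

theorem mono (c : Set X → Set X) : Monotone (alexApprox c) :=
  fun _ _ hPQ => Set.biUnion_subset_biUnion_left hPQ

theorem mono_left {ρ c : Set X → Set X} (h : ∀ P, ρ P ⊆ c P) (P : Set X) :
    alexApprox ρ P ⊆ alexApprox c P :=
  Set.iUnion₂_mono fun x _ => h {x}

theorem subset_self {c : Set X → Set X} (hext : ∀ P, P ⊆ c P) (P : Set X) :
    P ⊆ alexApprox c P :=
  fun x hx => Set.mem_biUnion hx (hext {x} rfl)

theorem subset_apply {c : Set X → Set X} (hmono : ∀ P Q : Set X, P ⊆ Q → c P ⊆ c Q)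
    (P : Set X) : alexApprox c P ⊆ c P :=
  Set.iUnion₂_subset fun _ hx => hmono _ _ (Set.singleton_subset_iff.2 hx)

theorem sUnion (c : Set X → Set X) (𝒳 : Set (Set X)) :
    alexApprox c (⋃₀ 𝒳) = ⋃₀ (alexApprox c '' 𝒳) := by
  ext z
  simp only [alexApprox, Set.sUnion_image, Set.mem_iUnion, Set.mem_sUnion, exists_prop]
  constructor
  · rintro ⟨x, ⟨P, hP, hxP⟩, hz⟩
    exact ⟨P, hP, x, hxP, hz⟩
  · rintro ⟨P, hP, x, hxP, hz⟩
    exact ⟨x, ⟨P, hP, hxP⟩, hz⟩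

theorem apply_singleton_subset_of_mem {c : Set X → Set X} (hidem : ∀ P, c (c P) = c P)
    (hmono : ∀ P Q : Set X, P ⊆ Q → c P ⊆ c Q) {x y : X} (hy : y ∈ c {x}) :
    c {y} ⊆ c {x} :=
  hidem {x} ▸ hmono _ _ (Set.singleton_subset_iff.2 hy)

theorem idem {c : Set X → Set X} (hext : ∀ P, P ⊆ c P) (hidem : ∀ P, c (c P) = c P)
    (hmono : ∀ P Q : Set X, P ⊆ Q → c P ⊆ c Q) (P : Set X) :
    alexApprox c (alexApprox c P) = alexApprox c P := by
  refine (Set.iUnion₂_subset fun y hy => ?_).antisymm (subset_self hext _)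
  obtain ⟨x, hxP, hyx⟩ := Set.mem_iUnion₂.1 hy
  exact (apply_singleton_subset_of_mem hidem hmono hyx).trans
    (Set.subset_biUnion_of_mem (u := fun x => c {x}) hxP)

theorem eq_self_of_sUnion {ρ : Set X → Set X}
    (hρU : ∀ 𝒳 : Set (Set X), ρ (⋃₀ 𝒳) = ⋃₀ (ρ '' 𝒳)) : alexApprox ρ = ρ := by
  funext P
  conv_rhs => rw [← Set.biUnion_of_singleton P, ← Set.sUnion_image, hρU, Set.sUnion_image,
    Set.biUnion_image]
  rfl

end alexApprox

/-- For an interior operator `c` on `𝒫(X)` with reverse inclusion (i.e. a closure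
operator: extensive, idempotent, monotone), `κ(P) = ⋃_{x∈P} c({x})` is again such an
operator, preserves arbitrary unions, lies below `c`, and is the largest
union-preserving such operator below `c`: `c` is AL-approximable with Alexandroff
approximation `κ`. -/
theorem powerset_AL_approximable {X : Type*} (c : Set X → Set X)
    (hext : ∀ P, P ⊆ c P) (hidem : ∀ P, c (c P) = c P)
    (hmono : ∀ P Q : Set X, P ⊆ Q → c P ⊆ c Q) :
    (∀ P, P ⊆ alexApprox c P) ∧
    (∀ P, alexApprox c (alexApprox c P) = alexApprox c P) ∧
    (∀ P Q : Set X, P ⊆ Q → alexApprox c P ⊆ alexApprox c Q) ∧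
    (∀ 𝒳 : Set (Set X), alexApprox c (⋃₀ 𝒳) = ⋃₀ (alexApprox c '' 𝒳)) ∧
    (∀ P, alexApprox c P ⊆ c P) ∧
    (∀ ρ : Set X → Set X, (∀ P, P ⊆ ρ P) → (∀ P, ρ (ρ P) = ρ P) →
      (∀ P Q : Set X, P ⊆ Q → ρ P ⊆ ρ Q) →
      (∀ 𝒳 : Set (Set X), ρ (⋃₀ 𝒳) = ⋃₀ (ρ '' 𝒳)) →
      (∀ P, ρ P ⊆ c P) → ∀ P, ρ P ⊆ alexApprox c P) := by
  refine ⟨alexApprox.subset_self hext, alexApprox.idem hext hidem hmono,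
    fun _ _ hPQ => alexApprox.mono c hPQ, alexApprox.sUnion c, alexApprox.subset_apply hmono, ?_⟩
  intro ρ _ _ _ hρU hρc P
  rw [← alexApprox.eq_self_of_sUnion hρU]
  exact alexApprox.mono_left hρc P
end

section
/- Let A be a complete lattice and let ι : A → A be an interior operator. Then ι is AL-approximable: the set {κ : κ is an Alexandroff interior operator on A and ι ≤ κ pointwise} has a least element ι_∞; i.e. there exists an Alexandroff interior operator ι_∞ with ι ≤ ι_∞, and for every Alexandroff interior operator τ with ι ≤ τ one has ι_∞ ≤ τ. -/
/-- An interior operator on a complete lattice: deflationary, idempotent, monotone. -/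
def IsInterior {A : Type*} [CompleteLattice A] (ι : A → A) : Prop :=
  (∀ a, ι a ≤ a) ∧ (∀ a, ι (ι a) = ι a) ∧ (∀ a b : A, a ≤ b → ι a ≤ ι b)

/-- The Alexandroff condition: the operator commutes with arbitrary infima. -/
def IsAlexandroffInterior {A : Type*} [CompleteLattice A] (ι : A → A) : Prop :=
  IsInterior ι ∧ ∀ B : Set A, ι (sInf B) = ⨅ b ∈ B, ι b

/-!
The pointwise infimum of Alexandroff interior operators above `ι` again commutes with infima,
is deflationary and lies above `ι`, but need not be idempotent. So take instead the infimum
`κ` of all deflationary infimum-preserving maps above `ι`: this class is closed under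
composition (because `ι` is monotone and idempotent) and under nonempty infima, so `κ` and
`κ ∘ κ` both belong to it, whence `κ ≤ κ ∘ κ` and `κ` is idempotent.
-/

section

variable {A : Type*} [CompleteLattice A]

def CommutesWithInf (f : A → A) : Prop :=
  ∀ B : Set A, f (sInf B) = ⨅ b ∈ B, f b

lemma commutesWithInf_id : CommutesWithInf (id : A → A) := fun _ => sInf_eq_iInf

lemma CommutesWithInf.comp {f g : A → A} (hf : CommutesWithInf f) (hg : CommutesWithInf g) :
    CommutesWithInf (f ∘ g) := fun B => by
  rw [Function.comp_apply, hg B, ← sInf_image, hf, iInf_image]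
  rfl

lemma CommutesWithInf.monotone {f : A → A} (hf : CommutesWithInf f) : Monotone f := by
  intro a b hab
  have h := hf {a, b}
  rw [sInf_pair, inf_eq_left.mpr hab, iInf_pair] at h
  rw [h]
  exact inf_le_right

lemma commutesWithInf_sInf {S : Set (A → A)} (hS : ∀ f ∈ S, CommutesWithInf f) :
    CommutesWithInf (sInf S) := fun B => by
  simp only [sInf_apply]
  rw [iInf_congr fun f : S => hS f f.2 B, iInf_comm]
  exact iInf_congr fun _ => iInf_comm

def infApproximants (ι : A → A) : Set (A → A) :=
  {f | (∀ a, f a ≤ a) ∧ CommutesWithInf f ∧ ι ≤ f}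

variable {ι : A → A}

lemma id_mem_infApproximants (hι : ∀ a, ι a ≤ a) : id ∈ infApproximants ι :=
  ⟨fun _ => le_rfl, commutesWithInf_id, hι⟩

lemma comp_mem_infApproximants (hι : IsInterior ι) {f g : A → A}
    (hf : f ∈ infApproximants ι) (hg : g ∈ infApproximants ι) :
    f ∘ g ∈ infApproximants ι := by
  obtain ⟨hf_defl, hf_inf, hιf⟩ := hf
  obtain ⟨hg_defl, hg_inf, hιg⟩ := hg
  refine ⟨fun a => (hf_defl _).trans (hg_defl a), hf_inf.comp hg_inf, fun a => ?_⟩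
  calc ι a = ι (ι a) := (hι.2.1 a).symm
    _ ≤ ι (g a) := hι.2.2 _ _ (hιg a)
    _ ≤ f (g a) := hιf _

lemma sInf_mem_infApproximants {S : Set (A → A)} (hS : S.Nonempty)
    (hSι : S ⊆ infApproximants ι) : sInf S ∈ infApproximants ι := by
  obtain ⟨f, hf⟩ := hS
  exact ⟨fun a => (sInf_le hf a).trans ((hSι hf).1 a),
    commutesWithInf_sInf fun g hg => (hSι hg).2.1,
    le_sInf fun g hg => (hSι hg).2.2⟩

lemma IsAlexandroffInterior.mem_infApproximants {τ : A → A} (hτ : IsAlexandroffInterior τ)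
    (hιτ : ι ≤ τ) : τ ∈ infApproximants ι :=
  ⟨hτ.1.1, hτ.2, hιτ⟩

lemma isAlexandroffInterior_of_mem_infApproximants {f : A → A} (hf : f ∈ infApproximants ι)
    (hidem : ∀ a, f (f a) = f a) : IsAlexandroffInterior f :=
  ⟨⟨hf.1, hidem, fun _ _ hab => hf.2.1.monotone hab⟩, hf.2.1⟩

end

/-- Every interior operator on a complete lattice is AL-approximable: the set of
Alexandroff interior operators lying above it (pointwise) has a least element. -/
theorem AL_approximable {A : Type*} [CompleteLattice A] (ι : A → A)
    (hι : IsInterior ι) :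
    ∃ κ : A → A, IsAlexandroffInterior κ ∧ (∀ a, ι a ≤ κ a) ∧
      ∀ τ : A → A, IsAlexandroffInterior τ → (∀ a, ι a ≤ τ a) → ∀ a, κ a ≤ τ a := by
  set κ := sInf (infApproximants ι)
  have hκ : κ ∈ infApproximants ι :=
    sInf_mem_infApproximants ⟨id, id_mem_infApproximants hι.1⟩ subset_rfl
  have hidem : ∀ a, κ (κ a) = κ a := fun a =>
    le_antisymm (hκ.1 _) (sInf_le (comp_mem_infApproximants hι hκ hκ) a)
  exact ⟨κ, isAlexandroffInterior_of_mem_infApproximants hκ hidem, hκ.2.2,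
    fun τ hτ hιτ => sInf_le (hτ.mem_infApproximants hιτ)⟩
end

section
/- Let (A, ≤, →) be an implicative structure and ι an Alexandroff interior operator on A. Then: (1) the set A_ι = {a : ι(a) = a} of ι-open elements is closed under arbitrary infima of A (so (A_ι, ≤) is a complete meet-semilattice with infima computed in A); (2) the operation a →_ι b = ι(a → b) on A_ι satisfies the axioms of an implicative structure on A_ι: it is antitone in the first variable, monotone in the second variable, and for a ∈ A_ι and B ⊆ A_ι, a →_ι (⨅ B) = ⨅_{b ∈ B} (a →_ι b); (3) if S ⊆ A is upward closed and satisfies modus ponens for → (a → b ∈ S and a ∈ S imply b ∈ S), then S ∩ A_ι is upward closed in A_ι and satisfies modus ponens for →_ι. -/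
def fixedSet {A : Type*} (ι : A → A) : Set A := {x | ι x = x}

section InfPreserving

variable {α β γ : Type*} [CompleteLattice α] [CompleteLattice β] [CompleteLattice γ]

theorem map_sInf_comp {f : α → β} {g : β → γ}
    (hf : ∀ B : Set α, f (sInf B) = ⨅ b ∈ B, f b) (hg : ∀ B : Set β, g (sInf B) = ⨅ b ∈ B, g b)
    (B : Set α) : g (f (sInf B)) = ⨅ b ∈ B, g (f b) := by
  rw [hf, ← sInf_image, hg, iInf_image]

theorem sInf_mem_fixedSet {ι : α → α} (halex : ∀ B : Set α, ι (sInf B) = ⨅ b ∈ B, ι b)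
    {C : Set α} (hC : C ⊆ fixedSet ι) : sInf C ∈ fixedSet ι := by
  change ι (sInf C) = sInf C
  rw [halex, sInf_eq_iInf]
  exact iInf_congr fun b => iInf_congr fun hb => hC hb

end InfPreserving

theorem mem_of_deflate_imp_mem {A : Type*} [Preorder A] {imp : A → A → A} {ι : A → A}
    {S : Set A} (hup : IsUpperSet S) (hmp : ∀ a b : A, imp a b ∈ S → a ∈ S → b ∈ S)
    (hdefl : ∀ a, ι a ≤ a) {a b : A} (himp : ι (imp a b) ∈ S) (ha : a ∈ S) : b ∈ S :=
  hmp a b (hup (hdefl _) himp) ha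

theorem change_implicative_structure_general {A : Type*} [CompleteLattice A]
    (imp : A → A → A)
    (hmono : ∀ a a' b b' : A, a' ≤ a → b ≤ b' → imp a b ≤ imp a' b')
    (hinf : ∀ (a : A) (B : Set A), imp a (sInf B) = ⨅ b ∈ B, imp a b)
    (ι : A → A)
    (hdefl : ∀ a, ι a ≤ a)
    (hmonoι : ∀ a b : A, a ≤ b → ι a ≤ ι b)
    (halex : ∀ B : Set A, ι (sInf B) = ⨅ b ∈ B, ι b) :
    -- (1) A_ι is closed under arbitrary infima
    (∀ C : Set A, C ⊆ fixedSet ι → sInf C ∈ fixedSet ι) ∧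
    -- (2) a →_ι b := ι (a → b) is an implicative structure on A_ι
    (∀ a a' b b', a ∈ fixedSet ι → a' ∈ fixedSet ι → b ∈ fixedSet ι → b' ∈ fixedSet ι →
      a' ≤ a → b ≤ b' → ι (imp a b) ≤ ι (imp a' b')) ∧
    (∀ a : A, a ∈ fixedSet ι → ∀ B : Set A, B ⊆ fixedSet ι →
      ι (imp a (sInf B)) = ⨅ b ∈ B, ι (imp a b)) ∧
    -- (3) upward closure and modus ponens restrict to S ∩ A_ι
    (∀ S : Set A, (∀ a b : A, a ∈ S → a ≤ b → b ∈ S) →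
      (∀ a b : A, imp a b ∈ S → a ∈ S → b ∈ S) →
      ((∀ a b, a ∈ fixedSet ι → b ∈ fixedSet ι →
          a ∈ S ∩ fixedSet ι → a ≤ b → b ∈ S ∩ fixedSet ι) ∧
       (∀ a b, a ∈ fixedSet ι → b ∈ fixedSet ι →
          ι (imp a b) ∈ S ∩ fixedSet ι → a ∈ S ∩ fixedSet ι → b ∈ S ∩ fixedSet ι))) := by
  refine ⟨fun C hC => sInf_mem_fixedSet halex hC,
    fun a a' b b' _ _ _ _ ha hb => hmonoι _ _ (hmono a a' b b' ha hb),
    fun a _ B _ => map_sInf_comp (hinf a) halex B, fun S hup hmp => ⟨?_, ?_⟩⟩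
  · rintro a b - hb ⟨haS, -⟩ hab
    exact ⟨hup a b haS hab, hb⟩
  · have hS : IsUpperSet S := fun a b hab ha => hup a b ha hab
    rintro a b - hb ⟨himp, -⟩ ⟨ha, -⟩
    exact ⟨mem_of_deflate_imp_mem hS hmp hdefl himp ha, hb⟩

/-- Changing the implication by an Alexandroff interior operator: the open elements
`A_ι` are closed under arbitrary infima, `a →_ι b := ι(a → b)` is an implicative
structure on `A_ι`, and separator-type conditions restrict to `S ∩ A_ι`. -/
theorem change_implicative_structure {A : Type*} [CompleteLattice A]
    (imp : A → A → A)
    (hmono : ∀ a a' b b' : A, a' ≤ a → b ≤ b' → imp a b ≤ imp a' b')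
    (hinf : ∀ (a : A) (B : Set A), imp a (sInf B) = ⨅ b ∈ B, imp a b)
    (ι : A → A)
    (hdefl : ∀ a, ι a ≤ a) (hidem : ∀ a, ι (ι a) = ι a)
    (hmonoι : ∀ a b : A, a ≤ b → ι a ≤ ι b)
    (halex : ∀ B : Set A, ι (sInf B) = ⨅ b ∈ B, ι b) :
    -- (1) A_ι is closed under arbitrary infima
    (∀ C : Set A, C ⊆ fixedSet ι → sInf C ∈ fixedSet ι) ∧
    -- (2) a →_ι b := ι (a → b) is an implicative structure on A_ι
    (∀ a a' b b', a ∈ fixedSet ι → a' ∈ fixedSet ι → b ∈ fixedSet ι → b' ∈ fixedSet ι →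
      a' ≤ a → b ≤ b' → ι (imp a b) ≤ ι (imp a' b')) ∧
    (∀ a : A, a ∈ fixedSet ι → ∀ B : Set A, B ⊆ fixedSet ι →
      ι (imp a (sInf B)) = ⨅ b ∈ B, ι (imp a b)) ∧
    -- (3) upward closure and modus ponens restrict to S ∩ A_ι
    (∀ S : Set A, (∀ a b : A, a ∈ S → a ≤ b → b ∈ S) →
      (∀ a b : A, imp a b ∈ S → a ∈ S → b ∈ S) →
      ((∀ a b, a ∈ fixedSet ι → b ∈ fixedSet ι →
          a ∈ S ∩ fixedSet ι → a ≤ b → b ∈ S ∩ fixedSet ι) ∧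
       (∀ a b, a ∈ fixedSet ι → b ∈ fixedSet ι →
          ι (imp a b) ∈ S ∩ fixedSet ι → a ∈ S ∩ fixedSet ι → b ∈ S ∩ fixedSet ι))) :=
  change_implicative_structure_general imp hmono hinf ι hdefl hmonoι halex
end

section
/- Let (A, ≤, →) be an implicative structure with associated application ∘, let i = ⨅_{a ∈ A} (a → a), and let ι be an Alexandroff interior operator on A such that for all a, b ∈ A, ι(a) → b = a → b. Then: (1) for all a ∈ A, i ∘ a ≤ ι(a) ≤ a; and (2) for all a, b ∈ A, a ∘ ι(b) = a ∘ b. -/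
theorem appOf_congr_right {A : Type*} [CompleteLattice A] {imp : A → A → A} (a : A) {b b' : A}
    (h : imp b = imp b') : appOf imp a b = appOf imp a b' := by
  simp only [appOf, h]

theorem iota_compatible_imp_general {A : Type*} [CompleteLattice A]
    (imp : A → A → A)
    (ι : A → A)
    (hdefl : ∀ a, ι a ≤ a)
    (hcomp : ∀ a b : A, imp (ι a) b = imp a b) :
    (∀ a : A, appOf imp (⨅ x : A, imp x x) a ≤ ι a ∧ ι a ≤ a) ∧
    (∀ a b : A, appOf imp a (ι b) = appOf imp a b) := by
  refine ⟨fun a => ⟨appOf_le_of_le_imp ?_, hdefl a⟩,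
    fun a b => appOf_congr_right a (funext (hcomp b))⟩
  calc (⨅ x : A, imp x x) ≤ imp (ι a) (ι a) := iInf_le _ _
    _ = imp a (ι a) := hcomp a (ι a)

/-- If the Alexandroff interior operator `ι` satisfies `ι(a) → b = a → b`, then
with `i = ⨅ (a → a)`: (1) `i ∘ a ≤ ι(a) ≤ a`, and (2) `a ∘ ι(b) = a ∘ b`. -/
theorem iota_compatible_imp {A : Type*} [CompleteLattice A]
    (imp : A → A → A)
    (hmono : ∀ a a' b b' : A, a' ≤ a → b ≤ b' → imp a b ≤ imp a' b')
    (hinf : ∀ (a : A) (B : Set A), imp a (sInf B) = ⨅ b ∈ B, imp a b)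
    (ι : A → A)
    (hdefl : ∀ a, ι a ≤ a) (hidem : ∀ a, ι (ι a) = ι a)
    (hmonoι : ∀ a b : A, a ≤ b → ι a ≤ ι b)
    (halex : ∀ B : Set A, ι (sInf B) = ⨅ b ∈ B, ι b)
    (hcomp : ∀ a b : A, imp (ι a) b = imp a b) :
    (∀ a : A, appOf imp (⨅ x : A, imp x x) a ≤ ι a ∧ ι a ≤ a) ∧
    (∀ a b : A, appOf imp a (ι b) = appOf imp a b) :=
  iota_compatible_imp_general imp ι hdefl hcomp
end
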